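/- arXiv:1608.03349 — 3 statements merged into one kernel-verified Lean document; each statement's English description precedes it below -/
import Mathlib

section
/- Let Δ > 0, ω₀ > 0, k̄ > 0, τ̄ > 0, β ∈ ℝ, and suppose iτ̄β is a root of the characteristic equation λ = −τ̄(iω₀ + Δ) + τ̄(k̄/2)e^{−λ}. Then the sign of Re[ (k̄τ̄/2)·e^{iβτ̄} / (1 + (k̄τ̄/2)e^{−iβτ̄}) ] equals the sign of Δ + 2τ̄Δ² − (τ̄/4)k̄². -/
/-!
Write `z = (k̄τ̄/2) e^{iβτ̄}`. The quotient is `z / (1 + z̄) = z (1 + z) / |1 + z|²`, whose real part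
has numerator `Re z + 2 (Re z)² - |z|²`. The real part of the characteristic equation gives
`Re z = τ̄Δ`, and `|z|² = (k̄τ̄/2)²`, so the numerator is `τ̄ (Δ + 2τ̄Δ² - (τ̄/4)k̄²)`, while the
denominator is positive because `Re (1 + z) = 1 + τ̄Δ > 0`.
-/

open Complex ComplexConjugate

lemma Real.sign_mul_of_pos {c : ℝ} (hc : 0 < c) (y : ℝ) : Real.sign (c * y) = Real.sign y := by
  rcases lt_trichotomy y 0 with hy | rfl | hy
  · rw [Real.sign_of_neg hy, Real.sign_of_neg (mul_neg_of_pos_of_neg hc hy)]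
  · rw [mul_zero]
  · rw [Real.sign_of_pos hy, Real.sign_of_pos (mul_pos hc hy)]

lemma Complex.re_div_one_add_conj (z : ℂ) :
    (z / (1 + conj z)).re = (z.re + 2 * z.re ^ 2 - normSq z) / normSq (1 + z) := by
  have hnorm : normSq (1 + conj z) = normSq (1 + z) := by
    rw [← normSq_conj (1 + z), (starRingEnd ℂ).map_add, (starRingEnd ℂ).map_one]
  rw [div_re, hnorm, ← add_div]
  simp only [normSq_apply, add_re, add_im, one_re, one_im, conj_re, conj_im]
  ring

lemma Complex.sign_re_div_one_add_conj {z : ℂ} (hz : 0 < 1 + z.re) :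
    Real.sign (z / (1 + conj z)).re = Real.sign (z.re + 2 * z.re ^ 2 - normSq z) := by
  have hden : 0 < normSq (1 + z) :=
    normSq_pos.2 fun h => hz.ne' (by simpa using congrArg re h)
  rw [re_div_one_add_conj, div_eq_inv_mul, Real.sign_mul_of_pos (inv_pos.2 hden)]

theorem stmt_6_general (Δ ω₀ k τ β : ℝ) (hΔ : 0 < Δ) (hτ : 0 < τ)
    (hroot : Complex.I * (τ * β) =
      -(τ : ℂ) * (Complex.I * ω₀ + Δ) +
        (τ : ℂ) * (k / 2) * Complex.exp (-(Complex.I * (τ * β)))) :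
    Real.sign
        (((k * τ / 2 : ℂ) * Complex.exp (Complex.I * (β * τ)) /
            (1 + (k * τ / 2 : ℂ) * Complex.exp (-(Complex.I * (β * τ))))).re) =
      Real.sign (Δ + 2 * τ * Δ ^ 2 - (τ / 4) * k ^ 2) := by
  set e := exp (I * (β * τ))
  have he : e = exp ((β * τ : ℝ) * I) := by rw [mul_comm]; push_cast; rfl
  have he_conj : exp (-(I * (β * τ))) = conj e := by
    rw [← exp_conj, map_mul, conj_I, map_mul, conj_ofReal, conj_ofReal, neg_mul]
  have hc : (k * τ / 2 : ℂ) = ((k * τ / 2 : ℝ) : ℂ) := by push_cast; rfl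
  set z := (k * τ / 2 : ℂ) * e
  have hre : z.re = τ * Δ := by
    rw [mul_comm (τ : ℂ) β, he_conj] at hroot
    have hroot_re := congrArg re hroot
    simp only [mul_re, mul_im, add_re, add_im, neg_re, neg_im, I_re, I_im, ofReal_re, ofReal_im,
      conj_re, conj_im, div_ofNat_re, div_ofNat_im] at hroot_re
    simp only [z, hc, re_ofReal_mul]
    linear_combination -hroot_re
  have hnormSq : normSq z = (k * τ / 2) ^ 2 := by
    rw [normSq_mul, hc, normSq_ofReal, he, normSq_eq_norm_sq (exp _), norm_exp_ofReal_mul_I]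
    ring
  have hconj : (k * τ / 2 : ℂ) * exp (-(I * (β * τ))) = conj z := by
    rw [he_conj, map_mul, hc, conj_ofReal]
  rw [hconj, sign_re_div_one_add_conj (by rw [hre]; positivity), hre, hnormSq,
    show τ * Δ + 2 * (τ * Δ) ^ 2 - (k * τ / 2) ^ 2 = τ * (Δ + 2 * τ * Δ ^ 2 - τ / 4 * k ^ 2) by ring,
    Real.sign_mul_of_pos hτ]

theorem stmt_6 (Δ ω₀ k τ β : ℝ) (hΔ : 0 < Δ) (hω : 0 < ω₀) (hk : 0 < k) (hτ : 0 < τ)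
    (hroot : Complex.I * (τ * β) =
      -(τ : ℂ) * (Complex.I * ω₀ + Δ) +
        (τ : ℂ) * (k / 2) * Complex.exp (-(Complex.I * (τ * β)))) :
    Real.sign
        (((k * τ / 2 : ℂ) * Complex.exp (Complex.I * (β * τ)) /
            (1 + (k * τ / 2 : ℂ) * Complex.exp (-(Complex.I * (β * τ))))).re) =
      Real.sign (Δ + 2 * τ * Δ ^ 2 - (τ / 4) * k ^ 2) :=
  stmt_6_general Δ ω₀ k τ β hΔ hτ hroot
end

section
/- Let Δ > 0, ω₀ > 0, τ̄ > 0, k̄ > 0 and β ∈ ℝ with (k̄/2)e^{−iβτ̄} = iβ + iω₀ + Δ. Then Re l₂(0,0) < 0, where l₂(0,0) = −3k̄τ̄ / (1 + τ̄(iβ + iω₀ + Δ)). -/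
open Complex

lemma Complex.inv_re_pos {z : ℂ} (hz : 0 < z.re) : 0 < z⁻¹.re := by
  have hz₀ : z ≠ 0 := fun h => by simp [h] at hz
  rw [inv_re]
  exact div_pos hz (normSq_pos.mpr hz₀)

lemma Complex.re_ofReal_div_neg {a : ℝ} (ha : a < 0) {z : ℂ} (hz : 0 < z.re) :
    ((a : ℂ) / z).re < 0 := by
  rw [div_eq_mul_inv, re_ofReal_mul]
  exact mul_neg_of_neg_of_pos ha (inv_re_pos hz)

theorem stmt_8_general (Δ ω₀ τ k β : ℝ) (hΔ : 0 < Δ) (hτ : 0 < τ) (hk : 0 < k) :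
    ((-3 * k * τ : ℂ) / (1 + (τ : ℂ) * (Complex.I * β + Complex.I * ω₀ + Δ))).re < 0 := by
  have hnum : (-3 * k * τ : ℂ) = ((-3 * k * τ : ℝ) : ℂ) := by push_cast; ring
  have hden : 0 < (1 + (τ : ℂ) * (Complex.I * β + Complex.I * ω₀ + Δ)).re := by
    simp only [add_re, one_re, mul_re, I_re, I_im, ofReal_re, ofReal_im]
    nlinarith [mul_pos hτ hΔ]
  rw [hnum]
  exact re_ofReal_div_neg (by nlinarith [mul_pos hk hτ]) hden

theorem stmt_8 (Δ ω₀ τ k β : ℝ) (hΔ : 0 < Δ) (hω : 0 < ω₀) (hτ : 0 < τ) (hk : 0 < k)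
    (h : (k / 2 : ℂ) * Complex.exp (-(Complex.I * (β * τ))) =
      Complex.I * β + Complex.I * ω₀ + Δ) :
    ((-3 * k * τ : ℂ) / (1 + (τ : ℂ) * (Complex.I * β + Complex.I * ω₀ + Δ))).re < 0 :=
  stmt_8_general Δ ω₀ τ k β hΔ hτ hk
end

section
/- Let Δ > 0, ω₀ > 0, and for k > 2Δ define β₋(k) = −ω₀ − √(k²/4 − Δ²) and τ₀⁻(k) = (arcsin((−2β₋(k) − 2ω₀)/k) − 2π)/β₋(k). Then τ₀⁻(k) > 0 for all k > 2Δ, and τ₀⁻ is a continuous function of k on (2Δ, ∞). -/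
/-! Since `arcsin ≤ π / 2 < 2π` and `β₋ < 0`, the quotient `τ₀⁻` is a ratio of two negative
numbers. On `k > 2Δ > 0` both denominators, `k` and `β₋(k)`, are nonzero, so `τ₀⁻` is continuous
there as a composition of continuous functions. -/

open Real Set

lemma arcsin_sub_two_pi_neg (x : ℝ) : arcsin x - 2 * π < 0 := by
  linarith [arcsin_le_pi_div_two x, pi_pos]

lemma neg_sub_sqrt_neg {ω₀ : ℝ} (hω : 0 < ω₀) (x : ℝ) : -ω₀ - √x < 0 := by
  linarith [sqrt_nonneg x]

theorem stmt_13 (Δ ω₀ : ℝ) (hΔ : 0 < Δ) (hω : 0 < ω₀) :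
    let βm : ℝ → ℝ := fun k => -ω₀ - Real.sqrt (k ^ 2 / 4 - Δ ^ 2)
    let τ₀ : ℝ → ℝ := fun k =>
      (Real.arcsin ((-2 * βm k - 2 * ω₀) / k) - 2 * Real.pi) / βm k
    (∀ k : ℝ, 2 * Δ < k → 0 < τ₀ k) ∧ ContinuousOn τ₀ (Set.Ioi (2 * Δ)) := by
  intro βm τ₀
  have hβ_neg (k : ℝ) : βm k < 0 := neg_sub_sqrt_neg hω _
  have hβ_cont : Continuous βm := by fun_prop
  refine ⟨fun k _ => div_pos_of_neg_of_neg (arcsin_sub_two_pi_neg _) (hβ_neg k), ?_⟩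
  have hk_ne : ∀ k ∈ Ioi (2 * Δ), k ≠ 0 := fun k hk =>
    ((by positivity : 0 ≤ 2 * Δ).trans_lt hk).ne'
  exact ContinuousOn.div (by fun_prop (disch := assumption)) hβ_cont.continuousOn
    fun k _ => (hβ_neg k).ne
end
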